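/- arXiv:1107.3181 — 2 statements merged into one kernel-verified Lean document; each statement's English description precedes it below -/
import Mathlib

section
/- Let (X, μ) be a finite measure space, let 1 < p < 2, and let f, g : X → [0, ∞) be measurable functions such that g(x) > 0 for μ-almost every x. Then ∫_X f^{p−1} dμ ≤ (∫_X f² g^{p−2} dμ)^{(p−1)/2} · (∫_X g^{p} dμ)^{((2−p)(p−1))/(2p)} · μ(X)^{(3−p)/2 − ((2−p)(p−1))/(2p)}. (This two-step Hölder estimate, with exponents 2/(p−1) and then p(3−p)/((p−1)(2−p)), is the key inequality in the proof of the continuity of the homogenized map b in Lemma 3.6.) -/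
open MeasureTheory
open scoped ENNReal NNReal

/-!
Both steps are the interpolation form of Hölder's inequality,
`∫ F^θ G^{1-θ} ≤ (∫ F)^θ (∫ G)^{1-θ}`. Where `g > 0` we may split
`f^{p-1} = (f² g^{p-2})^θ (g^s)^{1-θ}` with `θ = (p-1)/2` and `s = (2-p)(p-1)/(3-p)`, which bounds
`∫ f^{p-1}` by `(∫ f² g^{p-2})^θ (∫ g^s)^{1-θ}`. Since `0 ≤ s ≤ p`, interpolating `g^s` between
`g^p` and the constant `1` gives `∫ g^s ≤ (∫ g^p)^{s/p} μ(X)^{1-s/p}`; multiplying out the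
exponents yields the claim.
-/

namespace ENNReal

theorem rpow_sub_one_eq_mul_rpow_mul_rpow {a b : ℝ≥0∞} (hb0 : b ≠ 0) (hbt : b ≠ ⊤) {p : ℝ}
    (hp1 : 1 ≤ p) (hp3 : p ≠ 3) :
    a ^ (p - 1) = (a ^ (2 : ℝ) * b ^ (p - 2)) ^ ((p - 1) / 2) *
      (b ^ ((2 - p) * (p - 1) / (3 - p))) ^ (1 - (p - 1) / 2) := by
  have h3p : 3 - p ≠ 0 := sub_ne_zero.mpr hp3.symm
  rw [mul_rpow_of_nonneg _ _ (by linarith), ← rpow_mul, ← rpow_mul, ← rpow_mul, mul_assoc,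
    ← rpow_add _ _ hb0 hbt]
  have hb_exp : (p - 2) * ((p - 1) / 2) + (2 - p) * (p - 1) / (3 - p) * (1 - (p - 1) / 2) = 0 := by
    field_simp; ring
  rw [hb_exp, rpow_zero, mul_one]
  congr 1; ring

end ENNReal

theorem lintegral_rpow_le_lintegral_rpow_mul_measure_univ {X : Type*} [MeasurableSpace X]
    {μ : Measure X} {h : X → ℝ≥0∞} (hh : AEMeasurable h μ) {s p : ℝ} (hs : 0 ≤ s) (hsp : s ≤ p)
    (hp : 0 < p) :
    ∫⁻ x, h x ^ s ∂μ ≤ (∫⁻ x, h x ^ p ∂μ) ^ (s / p) * μ Set.univ ^ (1 - s / p) := by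
  have key := ENNReal.lintegral_mul_norm_pow_le (hh.pow_const p) (aemeasurable_const (b := 1))
    (div_nonneg hs hp.le) (sub_nonneg.mpr ((div_le_one hp).mpr hsp)) (add_sub_cancel _ _)
  simpa only [ENNReal.one_rpow, mul_one, lintegral_const, one_mul, ← ENNReal.rpow_mul,
    mul_div_cancel₀ _ hp.ne'] using key

theorem holder_two_step_general {X : Type*} [MeasurableSpace X] (μ : Measure X)
    (p : ℝ) (hp1 : 1 < p) (hp2 : p < 2) (f g : X → ℝ≥0)
    (hf : Measurable f) (hg : Measurable g)
    (hgpos : ∀ᵐ x ∂μ, 0 < g x) :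
    ∫⁻ x, (f x : ℝ≥0∞) ^ (p - 1) ∂μ ≤
      (∫⁻ x, (f x : ℝ≥0∞) ^ (2 : ℝ) * (g x : ℝ≥0∞) ^ (p - 2) ∂μ) ^ ((p - 1) / 2) *
        (∫⁻ x, (g x : ℝ≥0∞) ^ p ∂μ) ^ ((2 - p) * (p - 1) / (2 * p)) *
        (μ Set.univ) ^ ((3 - p) / 2 - (2 - p) * (p - 1) / (2 * p)) := by
  set s := (2 - p) * (p - 1) / (3 - p) with hs_def
  set θ := (p - 1) / 2 with hθ_def
  have hfm := hf.coe_nnreal_ennreal.aemeasurable (μ := μ)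
  have hgm := hg.coe_nnreal_ennreal.aemeasurable (μ := μ)
  have hs : 0 ≤ s := div_nonneg (mul_nonneg (by linarith) (by linarith)) (by linarith)
  have hsp : s ≤ p := by rw [hs_def, div_le_iff₀ (by linarith)]; nlinarith
  have hfactor : ∀ᵐ x ∂μ, (f x : ℝ≥0∞) ^ (p - 1) = ((f x : ℝ≥0∞) ^ (2 : ℝ) *
      (g x : ℝ≥0∞) ^ (p - 2)) ^ θ * ((g x : ℝ≥0∞) ^ s) ^ (1 - θ) := by
    filter_upwards [hgpos] with x hx
    exact ENNReal.rpow_sub_one_eq_mul_rpow_mul_rpow (by exact_mod_cast hx.ne') ENNReal.coe_ne_top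
      hp1.le (by linarith)
  calc ∫⁻ x, (f x : ℝ≥0∞) ^ (p - 1) ∂μ
      ≤ (∫⁻ x, (f x : ℝ≥0∞) ^ (2 : ℝ) * (g x : ℝ≥0∞) ^ (p - 2) ∂μ) ^ θ *
          (∫⁻ x, (g x : ℝ≥0∞) ^ s ∂μ) ^ (1 - θ) := by
        rw [lintegral_congr_ae hfactor]
        exact ENNReal.lintegral_mul_norm_pow_le ((hfm.pow_const _).mul (hgm.pow_const _))
          (hgm.pow_const _) (by linarith) (by linarith) (add_sub_cancel _ _)
    _ ≤ (∫⁻ x, (f x : ℝ≥0∞) ^ (2 : ℝ) * (g x : ℝ≥0∞) ^ (p - 2) ∂μ) ^ θ *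
          ((∫⁻ x, (g x : ℝ≥0∞) ^ p ∂μ) ^ (s / p) * μ Set.univ ^ (1 - s / p)) ^ (1 - θ) := by
        gcongr
        · linarith
        · exact lintegral_rpow_le_lintegral_rpow_mul_measure_univ hgm hs hsp (by linarith)
    _ = _ := by
        rw [ENNReal.mul_rpow_of_nonneg _ _ (by linarith), ← ENNReal.rpow_mul, ← ENNReal.rpow_mul,
          ← mul_assoc]
        have h3p : 3 - p ≠ 0 := by linarith
        congr 3 <;> · rw [hs_def, hθ_def]; field_simp; ring

/-- The two-step Hölder estimate (exponents `2/(p−1)` and `p(3−p)/((p−1)(2−p))`) used in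
the proof of the continuity of the homogenized map `b`:
`∫ f^{p−1} ≤ (∫ f² g^{p−2})^{(p−1)/2} (∫ g^p)^{(2−p)(p−1)/(2p)} μ(X)^{(3−p)/2−(2−p)(p−1)/(2p)}`
on a finite measure space, for `1 < p < 2` and `g > 0` a.e. -/
theorem holder_two_step {X : Type*} [MeasurableSpace X] (μ : Measure X) [IsFiniteMeasure μ]
    (p : ℝ) (hp1 : 1 < p) (hp2 : p < 2) (f g : X → ℝ≥0)
    (hf : Measurable f) (hg : Measurable g)
    (hgpos : ∀ᵐ x ∂μ, 0 < g x) :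
    ∫⁻ x, (f x : ℝ≥0∞) ^ (p - 1) ∂μ ≤
      (∫⁻ x, (f x : ℝ≥0∞) ^ (2 : ℝ) * (g x : ℝ≥0∞) ^ (p - 2) ∂μ) ^ ((p - 1) / 2) *
        (∫⁻ x, (g x : ℝ≥0∞) ^ p ∂μ) ^ ((2 - p) * (p - 1) / (2 * p)) *
        (μ Set.univ) ^ ((3 - p) / 2 - (2 - p) * (p - 1) / (2 * p)) :=
  holder_two_step_general μ p hp1 hp2 f g hf hg hgpos
end

section
/- Let (X, μ) be a finite measure space, n ≥ 1, σ > 0 and 1 < p ≤ 2. There exists a constant C > 0 (depending only on p and σ) such that for all measurable vector fields F, G : X → ℝⁿ with ∫_X |F|^p dμ < ∞ and ∫_X |G|^p dμ < ∞ one has ∫_X |F − G|^{p} dμ ≤ C (∫_X (1 + |F| + |G|)^{p} dμ)^{(2−p)/2} · (∫_X ⟨A_{σ,p}(F) − A_{σ,p}(G), F − G⟩ dμ)^{p/2}. (This is the integral estimate, combining strong monotonicity with Hölder's inequality, that begins the proof of the Corrector Theorem for exponents between 1 and 2.) -/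
open MeasureTheory Classical
open scoped ENNReal NNReal

/-- The power-law constitutive map `A_{σ,p}(ξ) = σ|ξ|^{p−2} ξ` (with `A(0) = 0`). -/
noncomputable def powerLaw (n : ℕ) (σ p : ℝ) (ξ : EuclideanSpace ℝ (Fin n)) :
    EuclideanSpace ℝ (Fin n) :=
  if ξ = 0 then 0 else (σ * ‖ξ‖ ^ (p - 2)) • ξ

/-!
Pointwise, `A = A_{σ,p}` is strongly monotone with a degenerate weight. With `a = |ξ|`, `b = |η|`,
`⟨Aξ − Aη, ξ − η⟩ = σ((a^{p−2} + b^{p−2})(ab − ⟨ξ,η⟩) + (a − b)(a^{p−1} − b^{p−1}))`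
and `|ξ − η|² = 2(ab − ⟨ξ,η⟩) + (a − b)²`, and for `r ≥ max(a, b)` each term dominates the
matching part of `(p−1)σ/2 · r^{p−2}|ξ − η|²`: the first because `r^{p−2} ≤ a^{p−2}`, the second
by the tangent-line inequality for the concave map `t ↦ t^{p−1}`. With `r = W := 1 + |F| + |G|`,
Hölder's inequality with exponents `2/p` and `2/(2−p)` applied to
`|F − G|^p = (|F − G|² W^{p−2})^{p/2} · (W^p)^{(2−p)/2}` gives the estimate.
-/

theorem Real.mul_rpow_sub_one_mul_sub_le_rpow_sub_rpow {q a b : ℝ} (hq0 : 0 ≤ q) (hq1 : q ≤ 1)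
    (ha : 0 < a) (hb : 0 ≤ b) : q * a ^ (q - 1) * (a - b) ≤ a ^ q - b ^ q := by
  have amgm := Real.geom_mean_le_arith_mean2_weighted hq0 (sub_nonneg.2 hq1) hb ha.le
    (add_sub_cancel q 1)
  have h1 : a ^ (1 - q) * a ^ (q - 1) = 1 := by
    rw [← Real.rpow_add ha]; simp
  have h2 : a * a ^ (q - 1) = a ^ q := by
    rw [mul_comm, ← Real.rpow_add_one ha.ne']; simp
  have := mul_le_mul_of_nonneg_right amgm (Real.rpow_nonneg ha.le (q - 1))
  rw [mul_assoc, h1, mul_one] at this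
  linear_combination this + h2

namespace powerLaw

variable {n : ℕ} {σ p : ℝ}

theorem eq_smul (ξ : EuclideanSpace ℝ (Fin n)) : powerLaw n σ p ξ = (σ * ‖ξ‖ ^ (p - 2)) • ξ := by
  unfold powerLaw
  split_ifs with h <;> simp [h]

theorem inner_sub_sub_eq (ξ η : EuclideanSpace ℝ (Fin n)) :
    inner ℝ (powerLaw n σ p ξ - powerLaw n σ p η) (ξ - η) =
      σ * ((‖ξ‖ ^ (p - 2) + ‖η‖ ^ (p - 2)) * (‖ξ‖ * ‖η‖ - inner ℝ ξ η) +
        (‖ξ‖ - ‖η‖) * (‖ξ‖ ^ (p - 2) * ‖ξ‖ - ‖η‖ ^ (p - 2) * ‖η‖)) := by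
  simp only [eq_smul, inner_sub_left, inner_sub_right, real_inner_smul_left,
    real_inner_self_eq_norm_sq, real_inner_comm η ξ]
  ring

theorem inner_sub_sub_comm (ξ η : EuclideanSpace ℝ (Fin n)) :
    inner ℝ (powerLaw n σ p ξ - powerLaw n σ p η) (ξ - η) =
      inner ℝ (powerLaw n σ p η - powerLaw n σ p ξ) (η - ξ) := by
  rw [← inner_neg_neg, neg_sub, neg_sub]

theorem weighted_norm_sub_sq_le_inner (hσ : 0 ≤ σ) (hp1 : 1 < p) (hp2 : p ≤ 2)
    {ξ η : EuclideanSpace ℝ (Fin n)} {r : ℝ} (hξ : ‖ξ‖ ≤ r) (hη : ‖η‖ ≤ r) :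
    (p - 1) / 2 * σ * (r ^ (p - 2) * ‖ξ - η‖ ^ 2) ≤
      inner ℝ (powerLaw n σ p ξ - powerLaw n σ p η) (ξ - η) := by
  wlog hηξ : ‖η‖ ≤ ‖ξ‖ generalizing ξ η
  · rw [inner_sub_sub_comm, norm_sub_rev]
    exact this hη hξ (le_of_not_ge hηξ)
  rcases (norm_nonneg ξ).eq_or_lt with hξ0 | ha
  · have hη0 : ‖η‖ = 0 := le_antisymm (hξ0 ▸ hηξ) (norm_nonneg η)
    simp [norm_eq_zero.1 hξ0.symm, norm_eq_zero.1 hη0]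
  set a := ‖ξ‖
  set b := ‖η‖
  have hb : 0 ≤ b := norm_nonneg η
  have hcs : inner ℝ ξ η ≤ a * b := real_inner_le_norm ξ η
  have hsq : ‖ξ - η‖ ^ 2 = 2 * (a * b - inner ℝ ξ η) + (a - b) ^ 2 := by
    rw [norm_sub_sq_real]; ring
  have hra : r ^ (p - 2) ≤ a ^ (p - 2) := Real.rpow_le_rpow_of_nonpos ha hξ (by linarith)
  have hr0 : 0 ≤ r ^ (p - 2) := Real.rpow_nonneg (ha.le.trans hξ) _
  have hb0 : 0 ≤ b ^ (p - 2) := Real.rpow_nonneg hb _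
  have hpow (x : ℝ) (hx : 0 ≤ x) : x ^ (p - 2) * x = x ^ (p - 1) := by
    rw [← Real.rpow_add_one' hx (by linarith)]; ring_nf
  have htangent : (p - 1) * a ^ (p - 2) * (a - b) ≤ a ^ (p - 1) - b ^ (p - 1) := by
    have := Real.mul_rpow_sub_one_mul_sub_le_rpow_sub_rpow (q := p - 1) (by linarith)
      (by linarith) ha hb
    rwa [show p - 1 - 1 = p - 2 by ring] at this
  rw [inner_sub_sub_eq, hsq, hpow a ha.le, hpow b hb]
  have hcross : (p - 1) * r ^ (p - 2) * (a * b - inner ℝ ξ η) ≤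
      (a ^ (p - 2) + b ^ (p - 2)) * (a * b - inner ℝ ξ η) := by
    gcongr
    nlinarith [mul_le_mul_of_nonneg_right (by linarith : p - 1 ≤ 1) hr0]
  have hradial : (p - 1) / 2 * r ^ (p - 2) * (a - b) ^ 2 ≤
      (a - b) * (a ^ (p - 1) - b ^ (p - 1)) := by
    have hab : 0 ≤ a - b := sub_nonneg.2 hηξ
    calc (p - 1) / 2 * r ^ (p - 2) * (a - b) ^ 2
        ≤ (a - b) * ((p - 1) * a ^ (p - 2) * (a - b)) := by
          have hpab : 0 ≤ (p - 1) * (a - b) ^ 2 := mul_nonneg (by linarith) (sq_nonneg _)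
          nlinarith [mul_le_mul_of_nonneg_left hra hpab, mul_nonneg hpab hr0]
      _ ≤ (a - b) * (a ^ (p - 1) - b ^ (p - 1)) := mul_le_mul_of_nonneg_left htangent hab
  nlinarith [mul_le_mul_of_nonneg_left (add_le_add hcross hradial) hσ]

theorem enorm_sub_sq_mul_rpow_le (hσ : 0 < σ) (hp1 : 1 < p) (hp2 : p ≤ 2)
    (ξ η : EuclideanSpace ℝ (Fin n)) :
    (‖ξ - η‖₊ : ℝ≥0∞) ^ (2 : ℝ) * ENNReal.ofReal (1 + ‖ξ‖ + ‖η‖) ^ (p - 2) ≤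
      ENNReal.ofReal (2 / ((p - 1) * σ)) *
        ENNReal.ofReal (inner ℝ (powerLaw n σ p ξ - powerLaw n σ p η) (ξ - η)) := by
  have hr : 0 < 1 + ‖ξ‖ + ‖η‖ := by positivity
  have hc : 0 < (p - 1) * σ := mul_pos (by linarith) hσ
  have hmono := weighted_norm_sub_sq_le_inner (ξ := ξ) (η := η) (r := 1 + ‖ξ‖ + ‖η‖)
    hσ.le hp1 hp2 (by linarith [norm_nonneg η]) (by linarith [norm_nonneg ξ])
  have hreal : ‖ξ - η‖ ^ 2 * (1 + ‖ξ‖ + ‖η‖) ^ (p - 2) ≤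
      2 / ((p - 1) * σ) * inner ℝ (powerLaw n σ p ξ - powerLaw n σ p η) (ξ - η) := by
    rw [div_mul_eq_mul_div, le_div_iff₀ hc]
    linarith
  rw [← enorm_eq_nnnorm, ← ofReal_norm,
    ENNReal.ofReal_rpow_of_nonneg (norm_nonneg _) zero_le_two, ENNReal.ofReal_rpow_of_pos hr,
    Real.rpow_two, ← ENNReal.ofReal_mul (by positivity), ← ENNReal.ofReal_mul (by positivity)]
  exact ENNReal.ofReal_le_ofReal hreal

end powerLaw

theorem lintegral_rpow_le_weighted_sq_mul_rpow {X : Type*} [MeasurableSpace X] {μ : Measure X}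
    {f w : X → ℝ≥0∞} (hf : AEMeasurable f μ) (hw : AEMeasurable w μ) (hw0 : ∀ x, w x ≠ 0)
    (hw_top : ∀ x, w x ≠ ⊤) {p : ℝ} (hp0 : 0 ≤ p) (hp2 : p ≤ 2) :
    ∫⁻ x, f x ^ p ∂μ ≤
      (∫⁻ x, f x ^ (2 : ℝ) * w x ^ (p - 2) ∂μ) ^ (p / 2) *
        (∫⁻ x, w x ^ p ∂μ) ^ ((2 - p) / 2) := by
  have hsplit (x : X) :
      f x ^ p = (f x ^ (2 : ℝ) * w x ^ (p - 2)) ^ (p / 2) * (w x ^ p) ^ ((2 - p) / 2) := by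
    rw [ENNReal.mul_rpow_of_nonneg _ _ (by linarith), ← ENNReal.rpow_mul, ← ENNReal.rpow_mul,
      ← ENNReal.rpow_mul, mul_assoc, ← ENNReal.rpow_add _ _ (hw0 x) (hw_top x)]
    ring_nf
    rw [ENNReal.rpow_zero, mul_one]
  simp_rw [hsplit]
  exact ENNReal.lintegral_mul_norm_pow_le ((hf.pow_const _).mul (hw.pow_const _))
    (hw.pow_const _) (by linarith) (by linarith) (by ring)

theorem corrector_integral_estimate_sublinear_general {X : Type*} [MeasurableSpace X]
    (μ : Measure X)
    (n : ℕ) (σ p : ℝ) (hσ : 0 < σ) (hp1 : 1 < p) (hp2 : p ≤ 2) :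
    ∃ C : ℝ, 0 < C ∧ ∀ F G : X → EuclideanSpace ℝ (Fin n),
      Measurable F → Measurable G →
      (∫⁻ x, (‖F x‖₊ : ℝ≥0∞) ^ p ∂μ) < ⊤ →
      (∫⁻ x, (‖G x‖₊ : ℝ≥0∞) ^ p ∂μ) < ⊤ →
      ∫⁻ x, (‖F x - G x‖₊ : ℝ≥0∞) ^ p ∂μ ≤
        ENNReal.ofReal C *
          (∫⁻ x, ENNReal.ofReal (1 + ‖F x‖ + ‖G x‖) ^ p ∂μ) ^ ((2 - p) / 2) *
          (∫⁻ x, ENNReal.ofReal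
            (inner ℝ (powerLaw n σ p (F x) - powerLaw n σ p (G x)) (F x - G x) : ℝ) ∂μ) ^ (p / 2) := by
  set K := 2 / ((p - 1) * σ)
  have hK : 0 < K := div_pos two_pos (mul_pos (by linarith) hσ)
  refine ⟨K ^ (p / 2), Real.rpow_pos_of_pos hK _, fun F G hF hG _ _ => ?_⟩
  have hW : Measurable fun x => ENNReal.ofReal (1 + ‖F x‖ + ‖G x‖) :=
    ((measurable_const.add hF.norm).add hG.norm).ennreal_ofReal
  have hW0 (x : X) : ENNReal.ofReal (1 + ‖F x‖ + ‖G x‖) ≠ 0 :=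
    (ENNReal.ofReal_pos.2 (by positivity)).ne'
  calc _ ≤ _ := lintegral_rpow_le_weighted_sq_mul_rpow
          (hF.sub hG).nnnorm.coe_nnreal_ennreal.aemeasurable hW.aemeasurable hW0
          (fun _ => ENNReal.ofReal_ne_top) (by linarith) hp2
    _ ≤ (ENNReal.ofReal K * ∫⁻ x, ENNReal.ofReal
            (inner ℝ (powerLaw n σ p (F x) - powerLaw n σ p (G x)) (F x - G x)) ∂μ) ^ (p / 2) *
          (∫⁻ x, ENNReal.ofReal (1 + ‖F x‖ + ‖G x‖) ^ p ∂μ) ^ ((2 - p) / 2) := by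
        rw [← lintegral_const_mul' _ _ ENNReal.ofReal_ne_top]
        gcongr ?_ ^ _ * _
        exact lintegral_mono fun x => powerLaw.enorm_sub_sq_mul_rpow_le hσ hp1 hp2 (F x) (G x)
    _ = _ := by
        rw [ENNReal.mul_rpow_of_nonneg _ _ (by linarith), ENNReal.ofReal_rpow_of_pos hK]
        ring

/-- The integral estimate combining strong monotonicity with Hölder's inequality that
begins the proof of the Corrector Theorem, for exponents `1 < p ≤ 2`. -/
theorem corrector_integral_estimate_sublinear {X : Type*} [MeasurableSpace X]
    (μ : Measure X) [IsFiniteMeasure μ]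
    (n : ℕ) (hn : 1 ≤ n) (σ p : ℝ) (hσ : 0 < σ) (hp1 : 1 < p) (hp2 : p ≤ 2) :
    ∃ C : ℝ, 0 < C ∧ ∀ F G : X → EuclideanSpace ℝ (Fin n),
      Measurable F → Measurable G →
      (∫⁻ x, (‖F x‖₊ : ℝ≥0∞) ^ p ∂μ) < ⊤ →
      (∫⁻ x, (‖G x‖₊ : ℝ≥0∞) ^ p ∂μ) < ⊤ →
      ∫⁻ x, (‖F x - G x‖₊ : ℝ≥0∞) ^ p ∂μ ≤
        ENNReal.ofReal C *
          (∫⁻ x, ENNReal.ofReal (1 + ‖F x‖ + ‖G x‖) ^ p ∂μ) ^ ((2 - p) / 2) *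
          (∫⁻ x, ENNReal.ofReal
            (inner ℝ (powerLaw n σ p (F x) - powerLaw n σ p (G x)) (F x - G x) : ℝ) ∂μ) ^ (p / 2) :=
  corrector_integral_estimate_sublinear_general μ n σ p hσ hp1 hp2
end
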